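/- arXiv:1006.2884 — 4 statements merged into one kernel-verified Lean document; each statement's English description precedes it below -/
import Mathlib

section
/- Let $f_1, \ldots, f_M$ be measurable functions on $\mathbb{R}^n$, let $\gamma$ be a fractional partition of $[M]$ using the hypergraph $\mathcal{S}$, and let $q_{\mathbf{s}} > 0$ be coefficients satisfying $\sum_{\mathbf{s} \in \mathcal{S}} \gamma_{\mathbf{s}} / q_{\mathbf{s}} = 1/r$. Then $\| \prod_{j \in [M]} f_j \|_r \le \prod_{\mathbf{s} \in \mathcal{S}} \| \prod_{j \in \mathbf{s}} f_j \|_{q_{\mathbf{s}}}^{\gamma_{\mathbf{s}}}$. -/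
/-! Since `γ` is a fractional partition, pointwise `|∏ⱼ fⱼ|^r = ∏ₛ (|∏_{j ∈ s} fⱼ|^{q_s})^{p_s}`
with weights `p_s = γ_s r / q_s`, and these weights sum to one by the hypothesis on the `q_s`.
The generalized Hölder inequality `∫ ∏ₛ hₛ^{pₛ} ≤ ∏ₛ (∫ hₛ)^{pₛ}` then gives the claim after
taking `r`-th roots. -/
open MeasureTheory ENNReal

theorem ENNReal.rpow_sum_of_nonneg {ι : Type*} (a : ℝ≥0∞) (s : Finset ι) {γ : ι → ℝ}
    (hγ : ∀ i ∈ s, 0 ≤ γ i) : a ^ (∑ i ∈ s, γ i) = ∏ i ∈ s, a ^ γ i := by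
  induction s using Finset.cons_induction with
  | empty => simp
  | cons i s hi ih =>
    rw [Finset.forall_mem_cons] at hγ
    rw [Finset.sum_cons, Finset.prod_cons,
      rpow_add_of_nonneg _ _ hγ.1 (Finset.sum_nonneg hγ.2), ih hγ.2]

theorem ENNReal.prod_eq_prod_prod_rpow_of_fractional_partition {ι : Type*} [Fintype ι]
    [DecidableEq ι] (S : Finset (Finset ι)) {γ : Finset ι → ℝ} (hγ : ∀ s ∈ S, 0 ≤ γ s)
    (hpart : ∀ i, ∑ s ∈ S with i ∈ s, γ s = 1) (a : ι → ℝ≥0∞) :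
    ∏ i, a i = ∏ s ∈ S, (∏ i ∈ s, a i) ^ γ s :=
  calc ∏ i, a i = ∏ i, ∏ s ∈ S with i ∈ s, a i ^ γ s := by
        refine Finset.prod_congr rfl fun i _ => ?_
        rw [← rpow_sum_of_nonneg _ _ fun s hs => hγ s (Finset.mem_filter.1 hs).1, hpart i,
          rpow_one]
    _ = ∏ s ∈ S, ∏ i ∈ s, a i ^ γ s :=
        (Finset.prod_comm' fun i s => by simp [and_comm]).symm
    _ = ∏ s ∈ S, (∏ i ∈ s, a i) ^ γ s :=
        Finset.prod_congr rfl fun s hs => prod_rpow_of_nonneg (hγ s hs)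

theorem ENNReal.lintegral_prod_rpow_rpow_le {α ι : Type*} [MeasurableSpace α] {μ : Measure α}
    (S : Finset ι) {g : ι → α → ℝ≥0∞} (hg : ∀ s ∈ S, AEMeasurable (g s) μ) {γ q : ι → ℝ}
    {r : ℝ} (hγ : ∀ s ∈ S, 0 ≤ γ s) (hq : ∀ s ∈ S, 0 < q s) (hr : 0 < r)
    (hsum : ∑ s ∈ S, γ s / q s = 1 / r) :
    (∫⁻ x, (∏ s ∈ S, g s x ^ γ s) ^ r ∂μ) ^ (1 / r)
      ≤ ∏ s ∈ S, ((∫⁻ x, g s x ^ q s ∂μ) ^ (1 / q s)) ^ γ s := by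
  set p : ι → ℝ := fun s => γ s * r / q s
  have hp : ∀ s ∈ S, 0 ≤ p s := fun s hs => by have := hγ s hs; have := hq s hs; positivity
  have hp_sum : ∑ s ∈ S, p s = 1 := by
    simp only [p, mul_div_right_comm, ← Finset.sum_mul, hsum]
    field_simp
  have hqp : ∀ s ∈ S, q s * p s = γ s * r := fun s hs => by
    have := (hq s hs).ne'
    simp only [p]
    field_simp
  have hpt : ∀ x, (∏ s ∈ S, g s x ^ γ s) ^ r = ∏ s ∈ S, (g s x ^ q s) ^ p s := fun x => by
    rw [← prod_rpow_of_nonneg hr.le]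
    refine Finset.prod_congr rfl fun s hs => ?_
    rw [← rpow_mul, ← rpow_mul, hqp s hs]
  have holder := lintegral_prod_norm_pow_le S (fun s hs => (hg s hs).pow_const (q s)) hp_sum hp
  calc (∫⁻ x, (∏ s ∈ S, g s x ^ γ s) ^ r ∂μ) ^ (1 / r)
      ≤ (∏ s ∈ S, (∫⁻ x, g s x ^ q s ∂μ) ^ p s) ^ (1 / r) := by
        simp only [hpt]
        gcongr
    _ = ∏ s ∈ S, ((∫⁻ x, g s x ^ q s ∂μ) ^ (1 / q s)) ^ γ s := by
        rw [← prod_rpow_of_nonneg (by positivity)]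
        refine Finset.prod_congr rfl fun s hs => ?_
        rw [← rpow_mul, ← rpow_mul]
        congr 1
        have := (hq s hs).ne'
        simp only [p]
        field_simp

theorem eLpNorm_ofReal_eq_lintegral {α ε : Type*} [MeasurableSpace α] {μ : Measure α} [ENorm ε]
    {t : ℝ} (ht : 0 < t) (f : α → ε) :
    eLpNorm f (ENNReal.ofReal t) μ = (∫⁻ x, ‖f x‖ₑ ^ t ∂μ) ^ (1 / t) := by
  rw [eLpNorm_eq_lintegral_rpow_enorm_toReal (by simpa using ht) ofReal_ne_top,
    toReal_ofReal ht.le]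

theorem eLpNorm_le_prod_eLpNorm_rpow {α ι ε ε' : Type*} [MeasurableSpace α] {μ : Measure α}
    [ENorm ε] [TopologicalSpace ε'] [ContinuousENorm ε'] {f : α → ε} (S : Finset ι)
    {g : ι → α → ε'} (hg : ∀ s ∈ S, AEStronglyMeasurable (g s) μ) {γ q : ι → ℝ} {r : ℝ}
    (hfg : ∀ᵐ x ∂μ, ‖f x‖ₑ ≤ ∏ s ∈ S, ‖g s x‖ₑ ^ γ s)
    (hγ : ∀ s ∈ S, 0 ≤ γ s) (hq : ∀ s ∈ S, 0 < q s) (hr : 0 < r)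
    (hsum : ∑ s ∈ S, γ s / q s = 1 / r) :
    eLpNorm f (ENNReal.ofReal r) μ ≤ ∏ s ∈ S, eLpNorm (g s) (ENNReal.ofReal (q s)) μ ^ γ s := by
  rw [eLpNorm_ofReal_eq_lintegral hr,
    Finset.prod_congr rfl fun s hs => by rw [eLpNorm_ofReal_eq_lintegral (hq s hs)]]
  calc (∫⁻ x, ‖f x‖ₑ ^ r ∂μ) ^ (1 / r)
      ≤ (∫⁻ x, (∏ s ∈ S, ‖g s x‖ₑ ^ γ s) ^ r ∂μ) ^ (1 / r) := by
        gcongr ?_ ^ _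
        exact lintegral_mono_ae (hfg.mono fun x hx => by gcongr)
    _ ≤ _ := lintegral_prod_rpow_rpow_le S (fun s hs => (hg s hs).enorm) hγ hq hr hsum

theorem fractional_holder_general (n M : ℕ)
    (f : Fin M → EuclideanSpace ℝ (Fin n) → ℝ) (hf : ∀ j, Measurable (f j))
    (S : Finset (Finset (Fin M))) (γ : Finset (Fin M) → ℝ)
    (hγ0 : ∀ s ∈ S, 0 ≤ γ s)
    (hpart : ∀ i : Fin M, ∑ s ∈ S.filter (fun s => i ∈ s), γ s = 1)
    (q : Finset (Fin M) → ℝ) (hq : ∀ s ∈ S, 0 < q s) (r : ℝ) (hr : 0 < r)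
    (hsum : ∑ s ∈ S, γ s / q s = 1 / r) :
    eLpNorm (fun x => ∏ j, f j x) (ENNReal.ofReal r) volume
      ≤ ∏ s ∈ S,
          (eLpNorm (fun x => ∏ j ∈ s, f j x) (ENNReal.ofReal (q s)) volume) ^ (γ s) := by
  have enorm_prod (s : Finset (Fin M)) (x) : ‖∏ j ∈ s, f j x‖ₑ = ∏ j ∈ s, ‖f j x‖ₑ := by
    simp only [enorm_eq_nnnorm, nnnorm_prod, ofNNReal_finsetProd]
  refine eLpNorm_le_prod_eLpNorm_rpow S
    (fun s _ => (Finset.measurable_prod s fun j _ => hf j).aestronglyMeasurable)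
    (Filter.Eventually.of_forall fun x => ?_) hγ0 hq hr hsum
  simp only [enorm_prod]
  exact (prod_eq_prod_prod_rpow_of_fractional_partition S hγ0 hpart _).le

/-- Fractional Hölder inequality: if `γ` is a fractional partition of `[M]` using the
hypergraph `S` and `∑ s in S, γ s / q s = 1 / r` with all `q s, r > 0`, then
`‖∏ j, f j‖_r ≤ ∏ s in S, ‖∏ j in s, f j‖_{q s} ^ (γ s)`. -/
theorem fractional_holder (n M : ℕ)
    (f : Fin M → EuclideanSpace ℝ (Fin n) → ℝ) (hf : ∀ j, Measurable (f j))
    (S : Finset (Finset (Fin M))) (γ : Finset (Fin M) → ℝ)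
    (hγ0 : ∀ s ∈ S, 0 ≤ γ s) (hγ1 : ∀ s ∈ S, γ s ≤ 1)
    (hpart : ∀ i : Fin M, ∑ s ∈ S.filter (fun s => i ∈ s), γ s = 1)
    (q : Finset (Fin M) → ℝ) (hq : ∀ s ∈ S, 0 < q s) (r : ℝ) (hr : 0 < r)
    (hsum : ∑ s ∈ S, γ s / q s = 1 / r) :
    eLpNorm (fun x => ∏ j, f j x) (ENNReal.ofReal r) volume
      ≤ ∏ s ∈ S,
          (eLpNorm (fun x => ∏ j ∈ s, f j x) (ENNReal.ofReal (q s)) volume) ^ (γ s) :=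
  fractional_holder_general n M f hf S γ hγ0 hpart q hq r hr hsum
end

section
/- Normalized leave-one-out Brunn-Minkowski inequality: for nonempty convex sets $K_1, \ldots, K_M$ in $\mathbb{R}^n$ with $M \ge 2$, $\left|\frac{K_1 + \cdots + K_M}{M}\right|^{1/n} \ge \frac{1}{M} \sum_{i=1}^M \left| \frac{\sum_{j \ne i} K_j}{M-1} \right|^{1/n}$. -/
/-!
The Brunn–Minkowski inequality `|A|^{1/n} + |B|^{1/n} ≤ |A + B|^{1/n}` is derived from the
Prékopa–Leindler inequality, which is proved in dimension one by integrating the one-dimensional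
Brunn–Minkowski inequality `|A| + |B| ≤ |A + B|` over level sets, and in higher dimension by
induction via Fubini.

For the theorem, each `K j` occurs in `M - 1` of the partial sums `∑ j ≠ i, K j`, and by convexity
`K j + ⋯ + K j = (M - 1) • K j`, so the partial sums add up to `(M - 1) • ∑ j, K j`. Brunn–Minkowski
for these `M` sets and the homogeneity `|c • S|^{1/n} = c |S|^{1/n}` give the inequality.
-/

open Pointwise MeasureTheory ENNReal Set

theorem ENNReal.geom_mean_le_arith_mean2_weighted {a b : ℝ} (ha : 0 < a) (hb : 0 < b)
    (hab : a + b = 1) (x y : ℝ≥0∞) :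
    x ^ a * y ^ b ≤ ENNReal.ofReal a * x + ENNReal.ofReal b * y := by
  have young := ENNReal.young_inequality (x ^ a) (y ^ b) (Real.HolderConjugate.inv_inv ha hb hab)
  rwa [ENNReal.rpow_rpow_inv ha.ne', ENNReal.rpow_rpow_inv hb.ne', ENNReal.ofReal_inv_of_pos ha,
    ENNReal.ofReal_inv_of_pos hb, div_eq_mul_inv, div_eq_mul_inv, inv_inv, inv_inv, mul_comm x,
    mul_comm y] at young

theorem measure_le_measure_add_of_nonempty {G : Type*} [MeasurableSpace G] [AddGroup G]
    (μ : Measure G) [μ.IsAddLeftInvariant] {s t : Set G} (hs : s.Nonempty) :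
    μ t ≤ μ (s + t) := by
  obtain ⟨a, ha⟩ := hs
  calc μ t = μ (a +ᵥ t) := (measure_vadd μ a t).symm
    _ ≤ μ (s + t) := measure_mono (vadd_set_subset_add ha)

/-- The translates `K + inf L` and `sup K + L` of `K` and `L` lie in `K + L` and meet in a single
point. -/
theorem Real.volume_add_volume_le_volume_add_of_isCompact {K L : Set ℝ} (hK : IsCompact K)
    (hL : IsCompact L) (hK₀ : K.Nonempty) (hL₀ : L.Nonempty) :
    volume K + volume L ≤ volume (K + L) := by
  set a := sSup K
  set b := sInf L
  have hinter : (b +ᵥ K) ∩ (a +ᵥ L) ⊆ {a + b} := by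
    rintro _ ⟨⟨x, hx, rfl⟩, y, hy, hxy⟩
    have := le_csSup hK.bddAbove hx
    have := csInf_le hL.bddBelow hy
    simp only [vadd_eq_add, mem_singleton_iff] at hxy ⊢
    linarith
  calc volume K + volume L = volume (b +ᵥ K) + volume (a +ᵥ L) := by
        rw [measure_vadd, measure_vadd]
    _ = volume ((b +ᵥ K) ∪ (a +ᵥ L)) := by
        rw [← measure_union_add_inter _ (hL.measurableSet.const_vadd a),
          measure_mono_null hinter (measure_singleton _), add_zero]
    _ ≤ volume (K + L) := by
        refine measure_mono (union_subset ?_ (vadd_set_subset_add (hK.sSup_mem hK₀)))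
        rw [add_comm K]
        exact vadd_set_subset_add (hL.sInf_mem hL₀)

theorem Real.volume_add_volume_le_volume_add {A B : Set ℝ} (hA : MeasurableSet A)
    (hB : MeasurableSet B) (hA₀ : A.Nonempty) (hB₀ : B.Nonempty) :
    volume A + volume B ≤ volume (A + B) := by
  obtain ⟨x, hx⟩ := hA₀
  obtain ⟨y, hy⟩ := hB₀
  rw [hA.measure_eq_iSup_isCompact, hB.measure_eq_iSup_isCompact]
  simp_rw [iSup_and']
  refine ENNReal.biSup_add_biSup_le' ⟨∅, empty_subset _, isCompact_empty⟩
    ⟨∅, empty_subset _, isCompact_empty⟩ fun K ⟨hKA, hK⟩ L ⟨hLB, hL⟩ => ?_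
  calc volume K + volume L = volume (insert x K) + volume (insert y L) := by
        rw [measure_congr (insert_ae_eq_self x K), measure_congr (insert_ae_eq_self y L)]
    _ ≤ volume (insert x K + insert y L) :=
        volume_add_volume_le_volume_add_of_isCompact (hK.insert x) (hL.insert y)
          (insert_nonempty _ _) (insert_nonempty _ _)
    _ ≤ volume (A + B) :=
        measure_mono (add_subset_add (insert_subset hx hKA) (insert_subset hy hLB))

theorem lintegral_eq_lintegral_meas_ofReal_lt {α : Type*} [MeasurableSpace α] (μ : Measure α)
    {F : α → ℝ≥0∞} (hF : Measurable F) (hF_top : ∀ x, F x ≠ ∞) :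
    ∫⁻ x, F x ∂μ = ∫⁻ t in Ioi 0, μ {x | ENNReal.ofReal t < F x} := by
  have layercake := lintegral_eq_lintegral_meas_lt μ
    (Filter.Eventually.of_forall fun x => ENNReal.toReal_nonneg) hF.ennreal_toReal.aemeasurable
  simp_rw [ENNReal.ofReal_toReal (hF_top _)] at layercake
  rw [layercake]
  refine setLIntegral_congr_fun measurableSet_Ioi fun t ht => ?_
  simp_rw [ENNReal.ofReal_lt_iff_lt_toReal (le_of_lt ht) (hF_top _)]

/-- The level sets of `min h 1` contain the weighted Minkowski sums of those of `f` and `g`, so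
integrating the one-dimensional Brunn–Minkowski inequality over the levels gives the claim. -/
theorem Real.add_lintegral_le_lintegral_of_iSup_eq_one {a b : ℝ} (ha : 0 < a) (hb : 0 < b)
    (hab : a + b = 1) {f g h : ℝ → ℝ≥0∞} (hf : Measurable f) (hg : Measurable g)
    (hh : Measurable h) (hf_sup : ⨆ x, f x = 1) (hg_sup : ⨆ x, g x = 1)
    (hfgh : ∀ x y, f x ^ a * g y ^ b ≤ h (a * x + b * y)) :
    ENNReal.ofReal a * (∫⁻ x, f x) + ENNReal.ofReal b * ∫⁻ x, g x ≤ ∫⁻ x, h x := by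
  have hf_le : ∀ x, f x ≤ 1 := fun x => hf_sup ▸ le_iSup f x
  have hg_le : ∀ x, g x ≤ 1 := fun x => hg_sup ▸ le_iSup g x
  have hf_top : ∀ x, f x ≠ ∞ := fun x => ne_top_of_le_ne_top one_ne_top (hf_le x)
  have hg_top : ∀ x, g x ≠ ∞ := fun x => ne_top_of_le_ne_top one_ne_top (hg_le x)
  have hlevel_anti : ∀ F : ℝ → ℝ≥0∞, Antitone fun t : ℝ => volume {x | ENNReal.ofReal t < F x} :=
    fun F s t hst => measure_mono fun x hx => (ENNReal.ofReal_le_ofReal hst).trans_lt hx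
  have hlevel : ∀ t ∈ Ioi (0 : ℝ),
      ENNReal.ofReal a * volume {x | ENNReal.ofReal t < f x}
        + ENNReal.ofReal b * volume {x | ENNReal.ofReal t < g x}
        ≤ volume {x | ENNReal.ofReal t < min (h x) 1} := by
    intro t ht
    rcases lt_or_ge t 1 with ht1 | ht1
    · have hne : ∀ {F : ℝ → ℝ≥0∞}, ⨆ x, F x = 1 → {x | ENNReal.ofReal t < F x}.Nonempty :=
        fun hF => lt_iSup_iff.1
          (show ENNReal.ofReal t < ⨆ x, _ from hF ▸ ENNReal.ofReal_lt_one.2 ht1)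
      have hsub : a • {x | ENNReal.ofReal t < f x} + b • {x | ENNReal.ofReal t < g x}
          ⊆ {x | ENNReal.ofReal t < min (h x) 1} := by
        rintro _ ⟨_, ⟨x, hx, rfl⟩, _, ⟨y, hy, rfl⟩, rfl⟩
        have ht0 : ENNReal.ofReal t ≠ 0 := by simpa using ht
        refine lt_min ?_ (ENNReal.ofReal_lt_one.2 ht1)
        calc ENNReal.ofReal t = ENNReal.ofReal t ^ a * ENNReal.ofReal t ^ b := by
              rw [← ENNReal.rpow_add _ _ ht0 ENNReal.ofReal_ne_top, hab, ENNReal.rpow_one]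
          _ < f x ^ a * g y ^ b :=
              ENNReal.mul_lt_mul (ENNReal.rpow_lt_rpow hx ha) (ENNReal.rpow_lt_rpow hy hb)
          _ ≤ h (a * x + b * y) := hfgh x y
      calc ENNReal.ofReal a * volume {x | ENNReal.ofReal t < f x}
            + ENNReal.ofReal b * volume {x | ENNReal.ofReal t < g x}
          = volume (a • {x | ENNReal.ofReal t < f x})
            + volume (b • {x | ENNReal.ofReal t < g x}) := by
            simp only [Measure.addHaar_smul_of_nonneg _ ha.le,
              Measure.addHaar_smul_of_nonneg _ hb.le, Module.finrank_self, pow_one]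
        _ ≤ volume (a • {x | ENNReal.ofReal t < f x} + b • {x | ENNReal.ofReal t < g x}) :=
            volume_add_volume_le_volume_add
              ((hf measurableSet_Ioi).const_smul₀ a) ((hg measurableSet_Ioi).const_smul₀ b)
              ((hne hf_sup).smul_set) ((hne hg_sup).smul_set)
        _ ≤ volume {x | ENNReal.ofReal t < min (h x) 1} := measure_mono hsub
    · have hempty : ∀ {F : ℝ → ℝ≥0∞}, (∀ x, F x ≤ 1) → {x | ENNReal.ofReal t < F x} = ∅ :=
        fun hF => eq_empty_of_forall_notMem fun x hx =>
          (hF x).not_gt ((ENNReal.one_le_ofReal.2 ht1).trans_lt hx)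
      simp [hempty hf_le, hempty hg_le]
  have hmin_top : ∀ x, min (h x) 1 ≠ ∞ := fun x => ne_top_of_le_ne_top one_ne_top (min_le_right _ _)
  calc ENNReal.ofReal a * (∫⁻ x, f x) + ENNReal.ofReal b * ∫⁻ x, g x
      = ∫⁻ t in Ioi 0, (ENNReal.ofReal a * volume {x | ENNReal.ofReal t < f x}
          + ENNReal.ofReal b * volume {x | ENNReal.ofReal t < g x}) := by
        rw [lintegral_add_left ((hlevel_anti f).measurable.const_mul _),
          lintegral_const_mul _ (hlevel_anti f).measurable,
          lintegral_const_mul _ (hlevel_anti g).measurable,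
          ← lintegral_eq_lintegral_meas_ofReal_lt volume hf hf_top,
          ← lintegral_eq_lintegral_meas_ofReal_lt volume hg hg_top]
    _ ≤ ∫⁻ t in Ioi 0, volume {x | ENNReal.ofReal t < min (h x) 1} :=
        setLIntegral_mono (hlevel_anti _).measurable hlevel
    _ = ∫⁻ x, min (h x) 1 :=
        (lintegral_eq_lintegral_meas_ofReal_lt _ (hh.min measurable_const) hmin_top).symm
    _ ≤ ∫⁻ x, h x := lintegral_mono fun x => min_le_left _ _

/-- Rescaling `f` and `g` to have supremum `1` reduces to
`Real.add_lintegral_le_lintegral_of_iSup_eq_one`, and weighted AM–GM turns its arithmetic mean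
into the geometric one. -/
theorem Real.lintegral_rpow_mul_lintegral_rpow_le_of_le {a b : ℝ} (ha : 0 < a) (hb : 0 < b)
    (hab : a + b = 1) {f g h : ℝ → ℝ≥0∞} (hf : Measurable f) (hg : Measurable g)
    (hh : Measurable h) {c : ℝ≥0∞} (hc : c ≠ ∞) (hfc : ∀ x, f x ≤ c) (hgc : ∀ x, g x ≤ c)
    (hfgh : ∀ x y, f x ^ a * g y ^ b ≤ h (a * x + b * y)) :
    (∫⁻ x, f x) ^ a * (∫⁻ x, g x) ^ b ≤ ∫⁻ x, h x := by
  set p := ⨆ x, f x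
  set q := ⨆ x, g x
  have hp : p ≠ ∞ := ne_top_of_le_ne_top hc (iSup_le hfc)
  have hq : q ≠ ∞ := ne_top_of_le_ne_top hc (iSup_le hgc)
  rcases eq_or_ne p 0 with hp₀ | hp₀
  · simp [ENNReal.iSup_eq_zero.1 hp₀, ENNReal.zero_rpow_of_pos ha]
  rcases eq_or_ne q 0 with hq₀ | hq₀
  · simp [ENNReal.iSup_eq_zero.1 hq₀, ENNReal.zero_rpow_of_pos hb]
  set r := p⁻¹ ^ a * q⁻¹ ^ b
  have hr₀ : r ≠ 0 := mul_ne_zero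
    (ENNReal.rpow_pos (ENNReal.inv_pos.2 hp) (ENNReal.inv_ne_top.2 hp₀)).ne'
    (ENNReal.rpow_pos (ENNReal.inv_pos.2 hq) (ENNReal.inv_ne_top.2 hq₀)).ne'
  have hr : r ≠ ∞ := ENNReal.mul_ne_top
    (ENNReal.rpow_ne_top_of_nonneg ha.le (ENNReal.inv_ne_top.2 hp₀))
    (ENNReal.rpow_ne_top_of_nonneg hb.le (ENNReal.inv_ne_top.2 hq₀))
  have hscale : ∀ u v : ℝ≥0∞, (p⁻¹ * u) ^ a * (q⁻¹ * v) ^ b = r * (u ^ a * v ^ b) := fun u v => by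
    rw [ENNReal.mul_rpow_of_nonneg _ _ ha.le, ENNReal.mul_rpow_of_nonneg _ _ hb.le,
      mul_mul_mul_comm]
  have hmean := Real.add_lintegral_le_lintegral_of_iSup_eq_one ha hb hab
    (hf.const_mul p⁻¹) (hg.const_mul q⁻¹) (hh.const_mul r)
    (by rw [← ENNReal.mul_iSup, ENNReal.inv_mul_cancel hp₀ hp])
    (by rw [← ENNReal.mul_iSup, ENNReal.inv_mul_cancel hq₀ hq])
    fun x y => (hscale (f x) (g y)).trans_le (by gcongr; exact hfgh x y)
  rw [lintegral_const_mul _ hf, lintegral_const_mul _ hg, lintegral_const_mul _ hh] at hmean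
  rw [← ENNReal.mul_le_mul_iff_right hr₀ hr, ← hscale]
  exact (ENNReal.geom_mean_le_arith_mean2_weighted ha hb hab _ _).trans hmean

def HasPrekopaLeindler {E : Type*} [MeasurableSpace E] [AddCommGroup E] [Module ℝ E]
    (μ : Measure E) : Prop :=
  ∀ ⦃a b : ℝ⦄, 0 < a → 0 < b → a + b = 1 →
    ∀ ⦃f g h : E → ℝ≥0∞⦄, Measurable f → Measurable g → Measurable h →
      (∀ x y, f x ^ a * g y ^ b ≤ h (a • x + b • y)) →
      (∫⁻ x, f x ∂μ) ^ a * (∫⁻ x, g x ∂μ) ^ b ≤ ∫⁻ x, h x ∂μ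

theorem Real.hasPrekopaLeindler_volume : HasPrekopaLeindler (volume : Measure ℝ) := by
  intro a b ha hb hab f g h hf hg hh hfgh
  have htrunc : ∀ {F : ℝ → ℝ≥0∞}, Measurable F → ∫⁻ x, F x = ⨆ k : ℕ, ∫⁻ x, min (F x) k :=
    fun hF => by
      rw [← lintegral_iSup (fun k => hF.min measurable_const)
        fun k l hkl x => min_le_min_left _ (by exact_mod_cast hkl)]
      simp_rw [← inf_iSup_eq, ENNReal.iSup_natCast, inf_top_eq]
  have hrpow_iSup : ∀ {e : ℝ} (he : 0 < e) (u : ℕ → ℝ≥0∞), (⨆ k, u k) ^ e = ⨆ k, u k ^ e :=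
    fun he u => (ENNReal.orderIsoRpow _ he).map_iSup u
  rw [htrunc hf, htrunc hg, hrpow_iSup ha, hrpow_iSup hb, ENNReal.iSup_mul]
  refine iSup_le fun k => ?_
  rw [ENNReal.mul_iSup]
  refine iSup_le fun l => ?_
  calc (∫⁻ x, min (f x) k) ^ a * (∫⁻ x, min (g x) l) ^ b
      ≤ (∫⁻ x, min (f x) (max k l : ℕ)) ^ a * (∫⁻ x, min (g x) (max k l : ℕ)) ^ b := by
        gcongr with x x <;> simp
    _ ≤ ∫⁻ x, h x :=
        Real.lintegral_rpow_mul_lintegral_rpow_le_of_le ha hb hab (hf.min measurable_const)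
          (hg.min measurable_const) hh (natCast_ne_top (max k l)) (fun x => min_le_right _ _)
          (fun x => min_le_right _ _) fun x y =>
            (mul_le_mul' (ENNReal.rpow_le_rpow (min_le_left _ _) ha.le)
              (ENNReal.rpow_le_rpow (min_le_left _ _) hb.le)).trans (hfgh x y)

section HasPrekopaLeindler

variable {E F : Type*} [MeasurableSpace E] [AddCommGroup E] [Module ℝ E]
  [MeasurableSpace F] [AddCommGroup F] [Module ℝ F]

/-- Fubini: the fibrewise integrals satisfy the hypothesis of Prékopa–Leindler on the first
factor by the inequality on the second. -/
theorem HasPrekopaLeindler.prod {μ : Measure E} {ν : Measure F} [SFinite ν]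
    (hμ : HasPrekopaLeindler μ) (hν : HasPrekopaLeindler ν) : HasPrekopaLeindler (μ.prod ν) := by
  intro a b ha hb hab f g h hf hg hh hfgh
  rw [lintegral_prod f hf.aemeasurable, lintegral_prod g hg.aemeasurable,
    lintegral_prod h hh.aemeasurable]
  refine hμ ha hb hab hf.lintegral_prod_right' hg.lintegral_prod_right'
    hh.lintegral_prod_right' fun s₁ s₂ => hν ha hb hab (hf.comp measurable_prodMk_left)
      (hg.comp measurable_prodMk_left) (hh.comp measurable_prodMk_left) fun y₁ y₂ => ?_
  simpa using hfgh (s₁, y₁) (s₂, y₂)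

theorem HasPrekopaLeindler.of_measurePreserving {μ : Measure E} {ν : Measure F} (e : E ≃ᵐ F)
    (he : MeasurePreserving e μ ν) (he_lin : IsLinearMap ℝ e) (hν : HasPrekopaLeindler ν) :
    HasPrekopaLeindler μ := by
  intro a b ha hb hab f g h hf hg hh hfgh
  have hsymm : ∀ u v : F, e.symm (a • u + b • v) = a • e.symm u + b • e.symm v := fun u v =>
    e.injective (by simp [he_lin.map_add, he_lin.map_smul])
  have key := hν ha hb hab (hf.comp e.symm.measurable) (hg.comp e.symm.measurable)
    (hh.comp e.symm.measurable) fun u v => by simpa [hsymm] using hfgh (e.symm u) (e.symm v)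
  simpa only [Function.comp_apply, (he.symm e).lintegral_comp hf, (he.symm e).lintegral_comp hg,
    (he.symm e).lintegral_comp hh] using key

end HasPrekopaLeindler

theorem hasPrekopaLeindler_volume_pi (n : ℕ) :
    HasPrekopaLeindler (volume : Measure (Fin n → ℝ)) := by
  induction n with
  | zero =>
    intro a b ha hb hab f g h hf hg hh hfgh
    have hvol : volume (univ : Set (Fin 0 → ℝ)) = 1 := by simp [volume_pi]
    simp only [lintegral_unique, hvol, mul_one]
    convert hfgh 0 0
  | succ n ih =>
    refine HasPrekopaLeindler.of_measurePreserving (MeasurableEquiv.piFinSuccAbove (fun _ => ℝ) 0)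
      ?_ ⟨fun _ _ => rfl, fun _ _ => rfl⟩ (Real.hasPrekopaLeindler_volume.prod ih)
    simpa only [volume_pi] using
      measurePreserving_piFinSuccAbove (fun _ : Fin (n + 1) => (volume : Measure ℝ)) 0

theorem EuclideanSpace.hasPrekopaLeindler_volume (n : ℕ) :
    HasPrekopaLeindler (volume : Measure (EuclideanSpace ℝ (Fin n))) :=
  .of_measurePreserving (MeasurableEquiv.toLp 2 (Fin n → ℝ)).symm
    (EuclideanSpace.volume_preserving_symm_measurableEquiv_toLp (Fin n))
    ⟨fun _ _ => rfl, fun _ _ => rfl⟩ (hasPrekopaLeindler_volume_pi n)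

theorem HasPrekopaLeindler.measure_rpow_mul_measure_rpow_le {E : Type*} [MeasurableSpace E]
    [AddCommGroup E] [Module ℝ E] {μ : Measure E} (hμ : HasPrekopaLeindler μ) {a b : ℝ}
    (ha : 0 < a) (hb : 0 < b) (hab : a + b = 1) {A B : Set E} (hA : MeasurableSet A)
    (hB : MeasurableSet B) :
    μ A ^ a * μ B ^ b ≤ μ (a • A + b • B) := by
  set C := toMeasurable μ (a • A + b • B)
  have hC : MeasurableSet C := measurableSet_toMeasurable _ _
  have key := hμ ha hb hab (measurable_one.indicator hA) (measurable_one.indicator hB)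
    (measurable_one.indicator hC) fun x y => ?_
  · rwa [lintegral_indicator_one hA, lintegral_indicator_one hB, lintegral_indicator_one hC,
      measure_toMeasurable] at key
  by_cases hx : x ∈ A
  · by_cases hy : y ∈ B
    · have hxy : a • x + b • y ∈ C := subset_toMeasurable _ _
        (add_mem_add (smul_mem_smul_set hx) (smul_mem_smul_set hy))
      simp [hx, hy, hxy]
    · simp [hy, ENNReal.zero_rpow_of_pos hb]
  · simp [hx, ENNReal.zero_rpow_of_pos ha]

namespace EuclideanSpace

variable {n : ℕ}

theorem volume_smul_toReal_rpow (hn : n ≠ 0) {c : ℝ} (hc : 0 ≤ c)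
    (S : Set (EuclideanSpace ℝ (Fin n))) :
    (volume (c • S)).toReal ^ ((1 : ℝ) / n) = c * (volume S).toReal ^ ((1 : ℝ) / n) := by
  rw [Measure.addHaar_smul_of_nonneg _ hc, finrank_euclideanSpace_fin, ENNReal.toReal_mul,
    ENNReal.toReal_ofReal (by positivity), Real.mul_rpow (by positivity) ENNReal.toReal_nonneg,
    one_div, Real.pow_rpow_inv_natCast hc hn]

theorem rpow_mul_rpow_le_volume_smul_add_smul {a b : ℝ} (ha : 0 < a) (hb : 0 < b)
    (hab : a + b = 1) {A B : Set (EuclideanSpace ℝ (Fin n))} (hA : IsCompact A)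
    (hB : IsCompact B) :
    ((volume A).toReal ^ ((1 : ℝ) / n)) ^ a * ((volume B).toReal ^ ((1 : ℝ) / n)) ^ b
      ≤ (volume (a • A + b • B)).toReal ^ ((1 : ℝ) / n) := by
  have hmul := (hasPrekopaLeindler_volume n).measure_rpow_mul_measure_rpow_le ha hb hab
    hA.measurableSet hB.measurableSet
  have hfin : volume (a • A + b • B) ≠ ∞ := ((hA.smul a).add (hB.smul b)).measure_lt_top.ne
  have hreal := ENNReal.toReal_mono hfin hmul
  rw [ENNReal.toReal_mul, ← ENNReal.toReal_rpow, ← ENNReal.toReal_rpow] at hreal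
  calc ((volume A).toReal ^ ((1 : ℝ) / n)) ^ a * ((volume B).toReal ^ ((1 : ℝ) / n)) ^ b
      = ((volume A).toReal ^ a * (volume B).toReal ^ b) ^ ((1 : ℝ) / n) := by
        rw [Real.mul_rpow (by positivity) (by positivity), ← Real.rpow_mul ENNReal.toReal_nonneg,
          ← Real.rpow_mul ENNReal.toReal_nonneg, ← Real.rpow_mul ENNReal.toReal_nonneg,
          ← Real.rpow_mul ENNReal.toReal_nonneg, mul_comm a, mul_comm b]
    _ ≤ (volume (a • A + b • B)).toReal ^ ((1 : ℝ) / n) := by gcongr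

/-- Write `A + B = s • (a • A' + b • B')` with `s = |A|^{1/n} + |B|^{1/n}`, `a = |A|^{1/n} / s`,
`b = |B|^{1/n} / s` and `A'`, `B'` the rescalings of `A`, `B` to unit volume, and apply the
multiplicative form. -/
theorem brunn_minkowski (hn : n ≠ 0) {A B : Set (EuclideanSpace ℝ (Fin n))} (hA : IsCompact A)
    (hB : IsCompact B) (hA₀ : A.Nonempty) (hB₀ : B.Nonempty) :
    (volume A).toReal ^ ((1 : ℝ) / n) + (volume B).toReal ^ ((1 : ℝ) / n)
      ≤ (volume (A + B)).toReal ^ ((1 : ℝ) / n) := by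
  have hAB : volume (A + B) ≠ ∞ := (hA.add hB).measure_lt_top.ne
  set α := (volume A).toReal ^ ((1 : ℝ) / n)
  set β := (volume B).toReal ^ ((1 : ℝ) / n)
  rcases (show 0 ≤ α by positivity).eq_or_lt with hα | hα
  · rw [← hα, zero_add]
    exact Real.rpow_le_rpow ENNReal.toReal_nonneg
      (ENNReal.toReal_mono hAB (measure_le_measure_add_of_nonempty _ hA₀)) (by positivity)
  rcases (show 0 ≤ β by positivity).eq_or_lt with hβ | hβ
  · rw [← hβ, add_zero, add_comm A]
    exact Real.rpow_le_rpow ENNReal.toReal_nonneg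
      (ENNReal.toReal_mono (add_comm A B ▸ hAB) (measure_le_measure_add_of_nonempty _ hB₀))
      (by positivity)
  have hunit : ∀ {S : Set (EuclideanSpace ℝ (Fin n))},
      0 < (volume S).toReal ^ ((1 : ℝ) / n) →
      (volume (((volume S).toReal ^ ((1 : ℝ) / n))⁻¹ • S)).toReal ^ ((1 : ℝ) / n) = 1 :=
    fun hS => by rw [volume_smul_toReal_rpow hn (inv_nonneg.2 hS.le), inv_mul_cancel₀ hS.ne']
  have hsplit : A + B = (α + β) • ((α / (α + β)) • α⁻¹ • A + (β / (α + β)) • β⁻¹ • B) := by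
    rw [smul_add, smul_smul, smul_smul, smul_smul, smul_smul,
      show (α + β) * (α / (α + β)) * α⁻¹ = 1 by field_simp,
      show (α + β) * (β / (α + β)) * β⁻¹ = 1 by field_simp, one_smul, one_smul]
  calc α + β = (α + β) * (((volume (α⁻¹ • A)).toReal ^ ((1 : ℝ) / n)) ^ (α / (α + β))
        * ((volume (β⁻¹ • B)).toReal ^ ((1 : ℝ) / n)) ^ (β / (α + β))) := by
        rw [hunit hα, hunit hβ, Real.one_rpow, Real.one_rpow, mul_one, mul_one]
    _ ≤ (α + β) * (volume ((α / (α + β)) • α⁻¹ • A + (β / (α + β)) • β⁻¹ • B)).toReal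
          ^ ((1 : ℝ) / n) := by
        gcongr
        exact rpow_mul_rpow_le_volume_smul_add_smul (by positivity) (by positivity)
          (by field_simp) (hA.smul _) (hB.smul _)
    _ = (volume (A + B)).toReal ^ ((1 : ℝ) / n) := by
        rw [hsplit, volume_smul_toReal_rpow hn (by positivity)]

end EuclideanSpace

theorem Convex.natCast_smul_eq_nsmul {E : Type*} [AddCommGroup E] [Module ℝ E] {s : Set E}
    (hs : Convex ℝ s) (hs₀ : s.Nonempty) (m : ℕ) : (m : ℝ) • s = m • s := by
  induction m with
  | zero => simp [zero_smul_set hs₀]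
  | succ m ih => rw [Nat.cast_succ, hs.add_smul m.cast_nonneg zero_le_one, one_smul, ih, succ_nsmul]

theorem Finset.sum_sum_univ_erase {ι M : Type*} [Fintype ι] [DecidableEq ι] [AddCommMonoid M]
    (f : ι → M) : ∑ i, ∑ j ∈ univ.erase i, f j = ∑ j, (Fintype.card ι - 1) • f j := by
  rw [Finset.sum_comm' (t' := univ) (s' := fun j => univ.erase j) fun i j => by simp [eq_comm]]
  simp [Finset.card_erase_of_mem]

theorem isCompact_finset_sum {ι E : Type*} [AddCommMonoid E] [TopologicalSpace E]
    [ContinuousAdd E] (s : Finset ι) {K : ι → Set E} (hK : ∀ i ∈ s, IsCompact (K i)) :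
    IsCompact (∑ i ∈ s, K i) :=
  Finset.sum_induction _ IsCompact (fun _ _ => IsCompact.add) isCompact_singleton hK

theorem Set.Nonempty.finset_sum {ι E : Type*} [AddCommMonoid E] (s : Finset ι) {K : ι → Set E}
    (hK : ∀ i ∈ s, (K i).Nonempty) : (∑ i ∈ s, K i).Nonempty :=
  Finset.sum_induction _ Set.Nonempty (fun _ _ => Set.Nonempty.add) Set.zero_nonempty hK

theorem EuclideanSpace.brunn_minkowski_finset_sum {n : ℕ} (hn : n ≠ 0) {ι : Type*}
    (s : Finset ι) {K : ι → Set (EuclideanSpace ℝ (Fin n))} (hK : ∀ i ∈ s, IsCompact (K i))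
    (hK₀ : ∀ i ∈ s, (K i).Nonempty) :
    ∑ i ∈ s, (volume (K i)).toReal ^ ((1 : ℝ) / n)
      ≤ (volume (∑ i ∈ s, K i)).toReal ^ ((1 : ℝ) / n) := by
  induction s using Finset.cons_induction with
  | empty => simp only [Finset.sum_empty]; positivity
  | cons i s _ ih =>
    simp only [Finset.forall_mem_cons] at hK hK₀
    rw [Finset.sum_cons, Finset.sum_cons]
    calc _ ≤ (volume (K i)).toReal ^ ((1 : ℝ) / n)
          + (volume (∑ j ∈ s, K j)).toReal ^ ((1 : ℝ) / n) := by gcongr; exact ih hK.2 hK₀.2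
      _ ≤ _ := brunn_minkowski hn hK.1 (isCompact_finset_sum s hK.2) hK₀.1
          (.finset_sum s hK₀.2)

/-- Normalized leave-one-out Brunn–Minkowski inequality:
`|(K 1 + ⋯ + K M)/M|^{1/n} ≥ (1/M) ∑ i, |(∑ {j ≠ i}, K j)/(M-1)|^{1/n}` for `M ≥ 2`. -/
theorem normalized_leave_one_out_brunn_minkowski (n M : ℕ) (hn : 0 < n) (hM : 2 ≤ M)
    (K : Fin M → Set (EuclideanSpace ℝ (Fin n)))
    (hKcv : ∀ j, Convex ℝ (K j)) (hKcp : ∀ j, IsCompact (K j))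
    (hKne : ∀ j, (K j).Nonempty) :
    (1 / (M : ℝ)) *
        ∑ i, (volume ((M - 1 : ℝ)⁻¹ • ∑ j ∈ Finset.univ.erase i, K j)).toReal
              ^ ((1 : ℝ) / n)
      ≤ (volume ((M : ℝ)⁻¹ • ∑ j, K j)).toReal ^ ((1 : ℝ) / n) := by
  have hM₁ : (0 : ℝ) < M - 1 := by
    have : (2 : ℝ) ≤ M := by exact_mod_cast hM
    linarith
  have hsum : ∑ i, ∑ j ∈ Finset.univ.erase i, K j = ((M : ℝ) - 1) • ∑ j, K j := by
    rw [Finset.sum_sum_univ_erase, Finset.smul_sum, Fintype.card_fin]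
    refine Finset.sum_congr rfl fun j _ => ?_
    rw [← (hKcv j).natCast_smul_eq_nsmul (hKne j), Nat.cast_sub (by omega), Nat.cast_one]
  have hBM := EuclideanSpace.brunn_minkowski_finset_sum hn.ne' Finset.univ
    (K := fun i => ∑ j ∈ Finset.univ.erase i, K j)
    (fun i _ => isCompact_finset_sum _ fun j _ => hKcp j)
    (fun i _ => .finset_sum _ fun j _ => hKne j)
  rw [hsum, EuclideanSpace.volume_smul_toReal_rpow hn.ne' hM₁.le] at hBM
  simp_rw [EuclideanSpace.volume_smul_toReal_rpow hn.ne' (inv_nonneg.2 hM₁.le),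
    EuclideanSpace.volume_smul_toReal_rpow hn.ne' (inv_nonneg.2 (Nat.cast_nonneg M)),
    ← Finset.mul_sum]
  calc _ ≤ 1 / (M : ℝ) * ((M - 1 : ℝ)⁻¹ * (((M : ℝ) - 1) * (volume (∑ j, K j)).toReal
          ^ ((1 : ℝ) / n))) := by gcongr
    _ = _ := by field_simp
end

section
/- Fractional Ehrhard inequality: let $K_1, \ldots, K_M$ be convex subsets of $\mathbb{R}^n$ of positive Lebesgue measure, $\beta$ a fractional partition of $[M]$ using $\mathcal{S}$, and $\lambda_1, \ldots, \lambda_M \ge 0$ with $\sum_j \lambda_j = 1$. Assuming the Ehrhard-Borell inequality $\Phi^{-1}(\gamma(\lambda A + (1-\lambda)B)) \ge \lambda \Phi^{-1}(\gamma(A)) + (1-\lambda)\Phi^{-1}(\gamma(B))$ for Borel sets of positive volume, one has $\Phi^{-1}(\gamma(\sum_{j} \lambda_j K_j)) \ge \sum_{\mathbf{s} \in \mathcal{S}} \beta_{\mathbf{s}} \lambda_{\mathbf{s}} \, \Phi^{-1}(\gamma(\sum_{j \in \mathbf{s}} \frac{\lambda_j}{\lambda_{\mathbf{s}}} K_j))$,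 where $\lambda_{\mathbf{s}} = \sum_{i \in \mathbf{s}} \lambda_i$ (assumed positive for each $\mathbf{s}$). -/
/-!
Ehrhard–Borell says that `A ↦ Φ⁻¹(γ(A))` is concave along Minkowski combinations; by induction it
satisfies Jensen's inequality for finitely many sets. Apply this to the sets
`U s = ∑ j ∈ s, (λ j / λ_s) • K j` with weights `β s * λ_s`, which sum to `1` because `β` is a
fractional partition. Since the `K j` are convex, `∑ s, (β s * λ_s) • U s` collapses to
`∑ j, (∑ s ∋ j, β s) • λ j • K j = ∑ j, λ j • K j`.

Minkowski sums of Borel sets need not be Borel, so everything is done with the interiors of the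
`K j`, whose sums are open. Nothing is lost: a convex set of positive volume has nonempty interior,
and `∑ c j • K j` lies between the convex set `∑ c j • interior (K j)` and its closure, whose
boundary is Lebesgue-null and hence Gaussian-null.
-/

open Pointwise MeasureTheory ProbabilityTheory

/-- The standard Gaussian measure on `ℝⁿ`. -/
noncomputable def stdGaussian (n : ℕ) : Measure (Fin n → ℝ) :=
  Measure.pi fun _ => gaussianReal 0 1

/-- The standard normal cumulative distribution function. -/
noncomputable def stdNormalCDF (x : ℝ) : ℝ := (gaussianReal 0 1 (Set.Iic x)).toReal

/-- The inverse of the standard normal CDF. -/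
noncomputable def stdNormalCDFInv : ℝ → ℝ := Function.invFun stdNormalCDF

theorem MeasureTheory.Measure.AbsolutelyContinuous.pi :
    ∀ {m : ℕ} {α : Fin m → Type*} [∀ i, MeasurableSpace (α i)] {μ ν : ∀ i, Measure (α i)}
      [∀ i, SigmaFinite (μ i)] [∀ i, SigmaFinite (ν i)],
      (∀ i, μ i ≪ ν i) → Measure.pi μ ≪ Measure.pi ν
  | 0, _, _, μ, ν, _, _, _ => by rw [Measure.pi_of_empty μ, Measure.pi_of_empty ν]
  | m + 1, _, _, μ, ν, _, _, h => by
    rw [← (measurePreserving_piFinSuccAbove μ 0).symm.map_eq,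
      ← (measurePreserving_piFinSuccAbove ν 0).symm.map_eq]
    exact ((h 0).prod (AbsolutelyContinuous.pi fun j => h _)).map (MeasurableEquiv.measurable _)

theorem Set.Nonempty.finsetSum {ι α : Type*} [AddCommMonoid α] {T : Finset ι} {A : ι → Set α}
    (h : ∀ t ∈ T, (A t).Nonempty) : (∑ t ∈ T, A t).Nonempty :=
  Finset.sum_induction _ Set.Nonempty (fun _ _ => Set.Nonempty.add) ⟨0, rfl⟩ h

theorem IsOpen.finsetSum {ι G : Type*} [AddCommGroup G] [TopologicalSpace G]
    [IsTopologicalAddGroup G] {T : Finset ι} {A : ι → Set G} {t₀ : ι} (ht₀ : t₀ ∈ T)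
    (h : IsOpen (A t₀)) : IsOpen (∑ t ∈ T, A t) := by
  classical
  rw [← Finset.add_sum_erase _ _ ht₀]
  exact h.add_right

theorem finsetSum_closure_subset_closure {ι M : Type*} [AddCommMonoid M] [TopologicalSpace M]
    [ContinuousAdd M] (T : Finset ι) (A : ι → Set M) :
    ∑ t ∈ T, closure (A t) ⊆ closure (∑ t ∈ T, A t) := by
  rw [← Set.image_finsetSum_pi, ← Set.image_finsetSum_pi, ← closure_pi_set]
  exact image_closure_subset_closure_image (continuous_finsetSum _ fun t _ => continuous_apply t)

section Convex

variable {ι E : Type*} [AddCommGroup E] [Module ℝ E]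

theorem Convex.finsetSum_smul {C : Set E} (hC : Convex ℝ C) (hne : C.Nonempty)
    {T : Finset ι} {c : ι → ℝ} (hc : ∀ t ∈ T, 0 ≤ c t) :
    (∑ t ∈ T, c t) • C = ∑ t ∈ T, c t • C := by
  classical
  induction T using Finset.induction_on with
  | empty => simpa using Set.zero_smul_set hne
  | insert a T ha ih =>
    rw [Finset.forall_mem_insert] at hc
    rw [Finset.sum_insert ha, Finset.sum_insert ha, hC.add_smul hc.1 (Finset.sum_nonneg hc.2),
      ih hc.2]

theorem smul_finsetSum_div_smul {r : ℝ} (hr : r ≠ 0) (T : Finset ι) (c : ι → ℝ) (A : ι → Set E) :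
    r • ∑ t ∈ T, (c t / r) • A t = ∑ t ∈ T, c t • A t := by
  simp_rw [Finset.smul_sum, smul_smul, mul_div_cancel₀ _ hr]

end Convex

section Measure

variable {E : Type*} [NormedAddCommGroup E] [NormedSpace ℝ E] [MeasurableSpace E] [BorelSpace E]
  [FiniteDimensional ℝ E] {μ : Measure E} [μ.IsAddHaarMeasure]

theorem Convex.interior_nonempty_of_measure_pos {K : Set E} (hK : Convex ℝ K) (h : 0 < μ K) :
    (interior K).Nonempty := by
  by_contra hint
  have hfr : K ⊆ frontier K := fun x hx =>
    ⟨subset_closure hx, fun hx' => hint ⟨x, hx'⟩⟩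
  exact h.ne' (measure_mono_null hfr (hK.addHaar_frontier μ))

theorem Convex.measure_eq_of_subset_closure {ν : Measure E} (hν : ν ≪ μ) {Y X : Set E}
    (hY : Convex ℝ Y) (hYX : Y ⊆ X) (hXY : X ⊆ closure Y) : ν X = ν Y := by
  refine le_antisymm ?_ (measure_mono hYX)
  calc ν X ≤ ν (Y ∪ frontier Y) := measure_mono (closure_eq_self_union_frontier Y ▸ hXY)
    _ ≤ ν Y + ν (frontier Y) := measure_union_le _ _
    _ = ν Y := by rw [hν (hY.addHaar_frontier μ), add_zero]

theorem measure_finsetSum_smul_interior {ι : Type*} {ν : Measure E} (hν : ν ≪ μ)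
    {K : ι → Set E} (hK : ∀ j, Convex ℝ (K j)) (hKint : ∀ j, (interior (K j)).Nonempty)
    (T : Finset ι) (c : ι → ℝ) :
    ν (∑ j ∈ T, c j • K j) = ν (∑ j ∈ T, c j • interior (K j)) := by
  refine Convex.measure_eq_of_subset_closure hν
    (convex_sum _ fun j _ => (hK j).interior.smul _)
    (Set.finsetSum_subset_finsetSum _ _ _ fun j _ => Set.smul_set_mono interior_subset) ?_
  refine (Set.finsetSum_subset_finsetSum _ _ (fun j => closure (c j • interior (K j)))
    fun j _ => ?_).trans (finsetSum_closure_subset_closure _ _)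
  calc c j • K j ⊆ c j • closure (interior (K j)) := by
        rw [(hK j).closure_interior_eq_closure_of_nonempty_interior (hKint j)]
        exact Set.smul_set_mono subset_closure
    _ ⊆ closure (c j • interior (K j)) := smul_closure_subset _ _

end Measure

section Jensen

variable {E : Type*} [NormedAddCommGroup E] [NormedSpace ℝ E]

def IsMinkowskiConcaveOnOpen (F : Set E → ℝ) : Prop :=
  ∀ A B : Set E, IsOpen A → IsOpen B → A.Nonempty → B.Nonempty → ∀ lam : ℝ, 0 ≤ lam → lam ≤ 1 →
    lam * F A + (1 - lam) * F B ≤ F (lam • A + (1 - lam) • B)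

theorem IsMinkowskiConcaveOnOpen.le_map_sum {F : Set E → ℝ} (hF : IsMinkowskiConcaveOnOpen F)
    {ι : Type*} {T : Finset ι} {A : ι → Set E} (hA : ∀ t ∈ T, IsOpen (A t))
    (hne : ∀ t ∈ T, (A t).Nonempty) {w : ι → ℝ} (hw : ∀ t ∈ T, 0 ≤ w t)
    (hw1 : ∑ t ∈ T, w t = 1) :
    ∑ t ∈ T, w t * F (A t) ≤ F (∑ t ∈ T, w t • A t) := by
  classical
  induction T using Finset.induction_on generalizing w with
  | empty => simp at hw1
  | insert a T ha ih =>
    rw [Finset.forall_mem_insert] at hA hne hw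
    rw [Finset.sum_insert ha] at hw1 ⊢
    rw [Finset.sum_insert ha]
    set r := ∑ t ∈ T, w t
    rcases (Finset.sum_nonneg hw.2 : 0 ≤ r).eq_or_lt with hr0 | hrpos
    · have hz : ∀ t ∈ T, w t = 0 := (Finset.sum_eq_zero_iff_of_nonneg hw.2).1 hr0.symm
      have hwa : w a = 1 := by linarith
      rw [hwa, one_mul, one_smul, Finset.sum_eq_zero fun t ht => by rw [hz t ht, zero_mul],
        Finset.sum_eq_zero fun t ht => by rw [hz t ht, Set.zero_smul_set (hne.2 t ht)],
        add_zero, add_zero]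
    · obtain ⟨t₀, ht₀, hwt₀⟩ := (Finset.sum_pos_iff_of_nonneg hw.2).1 hrpos
      set B := ∑ t ∈ T, (w t / r) • A t
      have hB : ∑ t ∈ T, (w t / r) * F (A t) ≤ F B :=
        ih hA.2 hne.2 (fun t ht => div_nonneg (hw.2 t ht) hrpos.le)
          (by rw [← Finset.sum_div, div_self hrpos.ne'])
      have hconcave := hF (A a) B hA.1 (.finsetSum ht₀ ((hA.2 t₀ ht₀).smul₀ (by positivity)))
        hne.1 (.finsetSum fun t ht => (hne.2 t ht).smul_set) (w a) hw.1 (by linarith)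
      rw [show 1 - w a = r by linarith, smul_finsetSum_div_smul hrpos.ne'] at hconcave
      calc w a * F (A a) + ∑ t ∈ T, w t * F (A t)
          = w a * F (A a) + r * ∑ t ∈ T, (w t / r) * F (A t) := by
            rw [Finset.mul_sum]
            congr 1
            exact Finset.sum_congr rfl fun t _ => by rw [← mul_assoc, mul_div_cancel₀ _ hrpos.ne']
        _ ≤ w a * F (A a) + r * F B := by gcongr
        _ ≤ _ := hconcave

end Jensen

section FractionalPartition

variable {ι : Type*} [DecidableEq ι]

def IsFractionalPartition (S : Finset (Finset ι)) (β : Finset ι → ℝ) : Prop :=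
  ∀ i, ∑ s ∈ S.filter (fun s => i ∈ s), β s = 1

theorem Finset.sum_sum_mem_comm {M : Type*} [AddCommMonoid M] [Fintype ι]
    (S : Finset (Finset ι)) (f : Finset ι → ι → M) :
    ∑ s ∈ S, ∑ i ∈ s, f s i = ∑ i, ∑ s ∈ S.filter (fun s => i ∈ s), f s i :=
  Finset.sum_comm' fun s i => by simp

theorem IsFractionalPartition.sum_mul_sum [Fintype ι] {S : Finset (Finset ι)} {β : Finset ι → ℝ}
    (hβ : IsFractionalPartition S β) (f : ι → ℝ) :
    ∑ s ∈ S, β s * ∑ i ∈ s, f i = ∑ i, f i := by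
  simp_rw [Finset.mul_sum, Finset.sum_sum_mem_comm S, ← Finset.sum_mul, hβ _, one_mul]

theorem IsFractionalPartition.sum_smul_sum_smul [Fintype ι] {E : Type*} [AddCommGroup E]
    [Module ℝ E] {S : Finset (Finset ι)} {β : Finset ι → ℝ} (hβ : IsFractionalPartition S β)
    (hβ0 : ∀ s ∈ S, 0 ≤ β s) {C : ι → Set E} (hC : ∀ i, Convex ℝ (C i))
    (hne : ∀ i, (C i).Nonempty) {c : ι → ℝ} (hc : ∀ i, 0 ≤ c i) :
    ∑ s ∈ S, β s • ∑ i ∈ s, c i • C i = ∑ i, c i • C i := by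
  simp_rw [Finset.smul_sum, smul_smul, Finset.sum_sum_mem_comm S]
  refine Finset.sum_congr rfl fun i _ => ?_
  rw [← (hC i).finsetSum_smul (hne i)
    fun s hs => mul_nonneg (hβ0 s (Finset.mem_filter.1 hs).1) (hc i), ← Finset.sum_mul, hβ i,
    one_mul]

end FractionalPartition

theorem stdGaussian_absolutelyContinuous (n : ℕ) : stdGaussian n ≪ volume := by
  rw [_root_.stdGaussian, volume_pi]
  exact .pi fun _ => gaussianReal_absolutelyContinuous 0 one_ne_zero

theorem isMinkowskiConcaveOnOpen_stdNormalCDFInv_stdGaussian {n : ℕ}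
    (hEhrhard : ∀ (A B : Set (Fin n → ℝ)), MeasurableSet A → MeasurableSet B →
      0 < volume A → 0 < volume B → ∀ lam : ℝ, 0 ≤ lam → lam ≤ 1 →
      lam * stdNormalCDFInv ((stdGaussian n A).toReal)
          + (1 - lam) * stdNormalCDFInv ((stdGaussian n B).toReal)
        ≤ stdNormalCDFInv ((stdGaussian n (lam • A + (1 - lam) • B)).toReal)) :
    IsMinkowskiConcaveOnOpen fun A => stdNormalCDFInv ((stdGaussian n A).toReal) :=
  fun A B hA hB hA' hB' => hEhrhard A B hA.measurableSet hB.measurableSet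
    (hA.measure_pos _ hA') (hB.measure_pos _ hB')

theorem fractional_ehrhard_general (n M : ℕ)
    (hEhrhard : ∀ (A B : Set (Fin n → ℝ)), MeasurableSet A → MeasurableSet B →
      0 < volume A → 0 < volume B → ∀ lam : ℝ, 0 ≤ lam → lam ≤ 1 →
      lam * stdNormalCDFInv ((stdGaussian n A).toReal)
          + (1 - lam) * stdNormalCDFInv ((stdGaussian n B).toReal)
        ≤ stdNormalCDFInv ((stdGaussian n (lam • A + (1 - lam) • B)).toReal))
    (K : Fin M → Set (Fin n → ℝ)) (hKcv : ∀ j, Convex ℝ (K j))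
    (hKvol : ∀ j, 0 < volume (K j))
    (S : Finset (Finset (Fin M))) (β : Finset (Fin M) → ℝ)
    (hβ0 : ∀ s ∈ S, 0 ≤ β s)
    (hpart : ∀ i : Fin M, ∑ s ∈ S.filter (fun s => i ∈ s), β s = 1)
    (lam : Fin M → ℝ) (hlam0 : ∀ j, 0 ≤ lam j) (hlam1 : ∑ j, lam j = 1)
    (hlamS : ∀ s ∈ S, 0 < ∑ i ∈ s, lam i) :
    ∑ s ∈ S, β s * (∑ i ∈ s, lam i) *
        stdNormalCDFInv
          ((stdGaussian n (∑ j ∈ s, (lam j / ∑ i ∈ s, lam i) • K j)).toReal)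
      ≤ stdNormalCDFInv ((stdGaussian n (∑ j, lam j • K j)).toReal) := by
  have hβ : IsFractionalPartition S β := hpart
  have hKint j : (interior (K j)).Nonempty :=
    (hKcv j).interior_nonempty_of_measure_pos (hKvol j)
  have hγ := measure_finsetSum_smul_interior (stdGaussian_absolutelyContinuous n) hKcv hKint
  set U : Finset (Fin M) → Set (Fin n → ℝ) :=
    fun s => ∑ j ∈ s, (lam j / ∑ i ∈ s, lam i) • interior (K j) with hU
  have hUopen : ∀ s ∈ S, IsOpen (U s) := fun s hs => by
    obtain ⟨j, hj, hlamj⟩ := (Finset.sum_pos_iff_of_nonneg fun i _ => hlam0 i).1 (hlamS s hs)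
    exact .finsetSum hj (isOpen_interior.smul₀ (div_pos hlamj (hlamS s hs)).ne')
  have hUne : ∀ s ∈ S, (U s).Nonempty := fun s _ => .finsetSum fun j _ => (hKint j).smul_set
  have hsum : ∑ s ∈ S, (β s * ∑ i ∈ s, lam i) • U s = ∑ j, lam j • interior (K j) := by
    rw [← hβ.sum_smul_sum_smul hβ0 (fun j => (hKcv j).interior) hKint hlam0]
    exact Finset.sum_congr rfl fun s hs => by
      rw [mul_smul, smul_finsetSum_div_smul (hlamS s hs).ne']
  have hjensen := (isMinkowskiConcaveOnOpen_stdNormalCDFInv_stdGaussian hEhrhard).le_map_sum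
    hUopen hUne (fun s hs => mul_nonneg (hβ0 s hs) (hlamS s hs).le)
    (by rw [hβ.sum_mul_sum, hlam1])
  rw [hsum] at hjensen
  simpa only [hγ, hU] using hjensen

/-- Fractional Ehrhard inequality: assuming the Ehrhard–Borell inequality for two Borel
sets of positive volume, for convex sets `K j` of positive volume, a fractional
partition `β` of `[M]` using `S`, and convex weights `λ j`,
`Φ⁻¹(γ(∑ j, λ j • K j)) ≥ ∑ s in S, β s * λ_s * Φ⁻¹(γ(∑ j in s, (λ j / λ_s) • K j))`. -/
theorem fractional_ehrhard (n M : ℕ) (hn : 0 < n)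
    (hEhrhard : ∀ (A B : Set (Fin n → ℝ)), MeasurableSet A → MeasurableSet B →
      0 < volume A → 0 < volume B → ∀ lam : ℝ, 0 ≤ lam → lam ≤ 1 →
      lam * stdNormalCDFInv ((stdGaussian n A).toReal)
          + (1 - lam) * stdNormalCDFInv ((stdGaussian n B).toReal)
        ≤ stdNormalCDFInv ((stdGaussian n (lam • A + (1 - lam) • B)).toReal))
    (K : Fin M → Set (Fin n → ℝ)) (hKcv : ∀ j, Convex ℝ (K j))
    (hKm : ∀ j, MeasurableSet (K j)) (hKvol : ∀ j, 0 < volume (K j))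
    (S : Finset (Finset (Fin M))) (β : Finset (Fin M) → ℝ)
    (hβ0 : ∀ s ∈ S, 0 ≤ β s) (hβ1 : ∀ s ∈ S, β s ≤ 1)
    (hpart : ∀ i : Fin M, ∑ s ∈ S.filter (fun s => i ∈ s), β s = 1)
    (lam : Fin M → ℝ) (hlam0 : ∀ j, 0 ≤ lam j) (hlam1 : ∑ j, lam j = 1)
    (hlamS : ∀ s ∈ S, 0 < ∑ i ∈ s, lam i) :
    ∑ s ∈ S, β s * (∑ i ∈ s, lam i) *
        stdNormalCDFInv
          ((stdGaussian n (∑ j ∈ s, (lam j / ∑ i ∈ s, lam i) • K j)).toReal)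
      ≤ stdNormalCDFInv ((stdGaussian n (∑ j, lam j • K j)).toReal) :=
  fractional_ehrhard_general n M hEhrhard K hKcv hKvol S β hβ0 hpart lam hlam0 hlam1 hlamS
end

section
/- Determinant Brunn-Minkowski inequality with fractional partition for leave-one-out sets: let $K_1, \ldots, K_M$ be positive semi-definite symmetric $n \times n$ real matrices and let $\mathcal{S}$ be a $d$-regular hypergraph on $[M]$. Then $\det(\sum_{j \in [M]} K_j)^{1/n} \ge \frac{1}{d} \sum_{\mathbf{s} \in \mathcal{S}} \det(\sum_{j \in \mathbf{s}} K_j)^{1/n}$. -/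
/-!
Minkowski's inequality `det A ^ (1/n) + det B ^ (1/n) ≤ det (A + B) ^ (1/n)` reduces, after
conjugating by `(A + B)^{-1/2}`, to the case `A + B = 1`, where it is AM-GM on the eigenvalues:
`det A ^ (1/n) + det B ^ (1/n) ≤ (tr A + tr B) / n = 1`. Applied to the matrices `∑ j ∈ s, K j`
for `s ∈ S`, it bounds the left-hand side by `det (∑ s ∈ S, ∑ j ∈ s, K j) ^ (1/n)`, and by
`d`-regularity that sum is `d • ∑ j, K j`, whose `det ^ (1/n)` is `d * det (∑ j, K j) ^ (1/n)`.
-/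

open Matrix Finset
open scoped MatrixOrder

theorem Finset.sum_sum_eq_nsmul_sum_of_regular {α β : Type*} [Fintype α] [DecidableEq α]
    [AddCommMonoid β] (f : α → β) (S : Finset (Finset α)) {d : ℕ}
    (hreg : ∀ a, #{s ∈ S | a ∈ s} = d) :
    ∑ s ∈ S, ∑ a ∈ s, f a = d • ∑ a, f a := by
  rw [Finset.sum_comm' (t' := univ) (s' := fun a => {s ∈ S | a ∈ s}) (by simp), smul_sum]
  simp only [sum_const, hreg]

namespace Matrix

variable {m : Type*} [Fintype m] [DecidableEq m]

theorem PosSemidef.det_rpow_le_trace_div_card [Nonempty m] {A : Matrix m m ℝ}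
    (hA : A.PosSemidef) :
    A.det ^ ((1 : ℝ) / Fintype.card m) ≤ A.trace / Fintype.card m := by
  have amgm := Real.geom_mean_le_arith_mean univ (fun _ => 1) hA.isHermitian.eigenvalues
    (fun _ _ => zero_le_one) (by simp [Fintype.card_pos]) (fun i _ => hA.eigenvalues_nonneg i)
  simp only [Real.rpow_one, one_mul, sum_const, card_univ, nsmul_eq_mul, mul_one] at amgm
  rw [hA.isHermitian.det_eq_prod_eigenvalues, hA.isHermitian.trace_eq_sum_eigenvalues, one_div]
  simpa using amgm

theorem PosSemidef.det_rpow_add_det_rpow_le_one_of_add_eq_one [Nonempty m]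
    {A B : Matrix m m ℝ} (hA : A.PosSemidef) (hB : B.PosSemidef) (hAB : A + B = 1) :
    A.det ^ ((1 : ℝ) / Fintype.card m) + B.det ^ ((1 : ℝ) / Fintype.card m) ≤ 1 := by
  have hcard : (0 : ℝ) < Fintype.card m := by exact_mod_cast Fintype.card_pos
  calc A.det ^ ((1 : ℝ) / Fintype.card m) + B.det ^ ((1 : ℝ) / Fintype.card m)
      ≤ A.trace / Fintype.card m + B.trace / Fintype.card m :=
        add_le_add hA.det_rpow_le_trace_div_card hB.det_rpow_le_trace_div_card
    _ = 1 := by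
        rw [← add_div, ← trace_add, hAB, trace_one, div_self hcard.ne']

theorem det_eq_det_conj_inv_mul_det_mul_self (X : Matrix m m ℝ) {s : Matrix m m ℝ}
    (hs : IsUnit s.det) : X.det = (s⁻¹ * X * s⁻¹).det * (s * s).det := by
  have := s.det_nonsing_inv_mul_det hs
  simp only [det_mul]
  linear_combination (-X.det * (1 + s⁻¹.det * s.det)) * this

theorem PosSemidef.det_rpow_add_det_rpow_le_of_posDef_add [Nonempty m]
    {A B : Matrix m m ℝ} (hA : A.PosSemidef) (hB : B.PosSemidef) (hAB : (A + B).PosDef) :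
    A.det ^ ((1 : ℝ) / Fintype.card m) + B.det ^ ((1 : ℝ) / Fintype.card m)
      ≤ (A + B).det ^ ((1 : ℝ) / Fintype.card m) := by
  set p : ℝ := 1 / Fintype.card m
  set s := CFC.sqrt (A + B)
  have hss : s * s = A + B := CFC.sqrt_mul_sqrt_self _ hAB.posSemidef.nonneg
  have hs : IsUnit s.det := by
    rw [isUnit_iff_ne_zero]
    intro h
    exact hAB.det_pos.ne' (by rw [← hss, det_mul, h, zero_mul])
  have hsinv : s⁻¹ᴴ = s⁻¹ := by
    rw [conjTranspose_nonsing_inv, (CFC.sqrt_nonneg (A + B)).posSemidef.1]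
  have hnorm : ∀ {X : Matrix m m ℝ}, X.PosSemidef → (s⁻¹ * X * s⁻¹).PosSemidef := fun hX => by
    simpa only [hsinv] using hX.mul_mul_conjTranspose_same s⁻¹
  have hsum : s⁻¹ * A * s⁻¹ + s⁻¹ * B * s⁻¹ = 1 := by
    rw [← add_mul, ← mul_add, ← hss, ← mul_assoc, nonsing_inv_mul _ hs, one_mul,
      mul_nonsing_inv _ hs]
  have hdet : 0 ≤ (A + B).det := hAB.posSemidef.det_nonneg
  calc A.det ^ p + B.det ^ p
      = ((s⁻¹ * A * s⁻¹).det ^ p + (s⁻¹ * B * s⁻¹).det ^ p) * (A + B).det ^ p := by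
        rw [A.det_eq_det_conj_inv_mul_det_mul_self hs,
          B.det_eq_det_conj_inv_mul_det_mul_self hs, hss, Real.mul_rpow (hnorm hA).det_nonneg hdet,
          Real.mul_rpow (hnorm hB).det_nonneg hdet, add_mul]
    _ ≤ 1 * (A + B).det ^ p := by
        gcongr
        exact (hnorm hA).det_rpow_add_det_rpow_le_one_of_add_eq_one (hnorm hB) hsum
    _ = (A + B).det ^ p := one_mul _

theorem PosSemidef.det_rpow_add_det_rpow_le [Nonempty m]
    {A B : Matrix m m ℝ} (hA : A.PosSemidef) (hB : B.PosSemidef) :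
    A.det ^ ((1 : ℝ) / Fintype.card m) + B.det ^ ((1 : ℝ) / Fintype.card m)
      ≤ (A + B).det ^ ((1 : ℝ) / Fintype.card m) := by
  by_cases hAB : (A + B).det = 0
  · have hA0 : A.det = 0 := by
      by_contra h
      exact ((hA.posDef_iff_det_ne_zero.mpr h).add_posSemidef hB).det_pos.ne' hAB
    have hB0 : B.det = 0 := by
      by_contra h
      exact ((hB.posDef_iff_det_ne_zero.mpr h).posSemidef_add hA).det_pos.ne' hAB
    simp [hA0, hB0, hAB]
  · exact hA.det_rpow_add_det_rpow_le_of_posDef_add hB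
      ((hA.add hB).posDef_iff_det_ne_zero.mpr hAB)

theorem sum_det_rpow_le_det_sum_rpow [Nonempty m] {ι : Type*} (s : Finset ι)
    {A : ι → Matrix m m ℝ} (hA : ∀ i ∈ s, (A i).PosSemidef) :
    ∑ i ∈ s, (A i).det ^ ((1 : ℝ) / Fintype.card m)
      ≤ (∑ i ∈ s, A i).det ^ ((1 : ℝ) / Fintype.card m) := by
  induction s using Finset.cons_induction with
  | empty => simp
  | cons a s _ ih =>
    rw [sum_cons, sum_cons]
    have hs : ∀ i ∈ s, (A i).PosSemidef := fun i hi => hA i (mem_cons_of_mem hi)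
    exact (add_le_add_right (ih hs) _).trans
      ((hA a (mem_cons_self a s)).det_rpow_add_det_rpow_le (posSemidef_sum s hs))

theorem PosSemidef.det_nsmul_rpow [Nonempty m] {A : Matrix m m ℝ} (hA : A.PosSemidef) (d : ℕ) :
    (d • A).det ^ ((1 : ℝ) / Fintype.card m) = d * A.det ^ ((1 : ℝ) / Fintype.card m) := by
  rw [← Nat.cast_smul_eq_nsmul ℝ, det_smul, Real.mul_rpow (by positivity) hA.det_nonneg,
    ← Real.rpow_natCast, ← Real.rpow_mul d.cast_nonneg,
    mul_one_div_cancel (by simp [Fintype.card_ne_zero]), Real.rpow_one]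

end Matrix

theorem det_fractional_brunn_minkowski_general (n M d : ℕ) (hn : 0 < n)
    (K : Fin M → Matrix (Fin n) (Fin n) ℝ) (hK : ∀ j, (K j).PosSemidef)
    (S : Finset (Finset (Fin M)))
    (hreg : ∀ i : Fin M, (S.filter (fun s => i ∈ s)).card = d) :
    (1 / d : ℝ) * ∑ s ∈ S, (∑ j ∈ s, K j).det ^ ((1 : ℝ) / n)
      ≤ (∑ j, K j).det ^ ((1 : ℝ) / n) := by
  have : Nonempty (Fin n) := ⟨⟨0, hn⟩⟩
  have hsum : (∑ j, K j).PosSemidef := posSemidef_sum univ fun j _ => hK j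
  have superadd := sum_det_rpow_le_det_sum_rpow S fun s _ => posSemidef_sum s fun j _ => hK j
  rw [sum_sum_eq_nsmul_sum_of_regular K S hreg, hsum.det_nsmul_rpow] at superadd
  simp only [Fintype.card_fin] at superadd
  calc (1 / d : ℝ) * ∑ s ∈ S, (∑ j ∈ s, K j).det ^ ((1 : ℝ) / n)
      ≤ (1 / d : ℝ) * d * (∑ j, K j).det ^ ((1 : ℝ) / n) := by
        rw [mul_assoc]; gcongr
    _ ≤ (∑ j, K j).det ^ ((1 : ℝ) / n) := by
        refine mul_le_of_le_one_left (Real.rpow_nonneg hsum.det_nonneg _) ?_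
        -- `1 / d * d` is `0` rather than `1` when `d = 0`.
        rcases eq_or_ne (d : ℝ) 0 with hd | hd <;> simp [hd]

/-- Determinant Brunn–Minkowski inequality with the degree fractional partition of a
`d`-regular hypergraph: for positive semidefinite symmetric matrices `K j`,
`det(∑ j, K j)^{1/n} ≥ (1/d) ∑ s in S, det(∑ j in s, K j)^{1/n}`. -/
theorem det_fractional_brunn_minkowski (n M d : ℕ) (hn : 0 < n) (hd : 0 < d)
    (K : Fin M → Matrix (Fin n) (Fin n) ℝ) (hK : ∀ j, (K j).PosSemidef)
    (S : Finset (Finset (Fin M)))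
    (hreg : ∀ i : Fin M, (S.filter (fun s => i ∈ s)).card = d) :
    (1 / d : ℝ) * ∑ s ∈ S, (∑ j ∈ s, K j).det ^ ((1 : ℝ) / n)
      ≤ (∑ j, K j).det ^ ((1 : ℝ) / n) :=
  det_fractional_brunn_minkowski_general n M d hn K hK S hreg
end
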